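/- Let G be a connected nonbipartite graph with a perfect matching M. Then the anti-forcing number af(G, M) is strictly less than the cyclomatic number |E(G)| − |V(G)| + 1 of G. -/

import Mathlib

open scoped Classical

variable {V : Type*} [Fintype V] [DecidableEq V]

/-- `M` is a perfect matching of `G`: a set of edges of `G` such that every
vertex lies in exactly one edge of `M`. -/
def IsPM (G : SimpleGraph V) (M : Set (Sym2 V)) : Prop :=
  M ⊆ G.edgeSet ∧ ∀ v : V, ∃! e, e ∈ M ∧ v ∈ e

/-- `M` is the unique perfect matching of `G`. -/
def IsUniquePM (G : SimpleGraph V) (M : Set (Sym2 V)) : Prop :=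
  IsPM G M ∧ ∀ M', IsPM G M' → M' = M

/-- A closed walk `c` is an `M`-alternating cycle: it is a cycle of even length
whose edges lie alternately in `M` and outside `M`. -/
def IsAltCycle {G : SimpleGraph V} (M : Set (Sym2 V)) {v : V} (c : G.Walk v v) : Prop :=
  c.IsCycle ∧ Even c.edges.length ∧
    ((∀ i (h : i < c.edges.length), c.edges.get ⟨i, h⟩ ∈ M ↔ Even i) ∨
     (∀ i (h : i < c.edges.length), c.edges.get ⟨i, h⟩ ∈ M ↔ ¬ Even i))

/-- `S` is an anti-forcing set of the perfect matching `M` of `G`: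
`S` consists of edges of `G` not in `M` and `M` is the unique perfect matching
of `G - S`. -/
def IsAntiForcingSet (G : SimpleGraph V) (M S : Set (Sym2 V)) : Prop :=
  S ⊆ G.edgeSet \ M ∧ IsUniquePM (G.deleteEdges S) M

/-- The anti-forcing number of a perfect matching `M` of `G`. -/
noncomputable def af (G : SimpleGraph V) (M : Set (Sym2 V)) : ℕ :=
  sInf {n | ∃ S : Finset (Sym2 V), S.card = n ∧ IsAntiForcingSet G M ↑S}

/-!
Extend the matching `M`, which is a forest, to a spanning tree `T` of `G`. Since `G` is not
bipartite, some edge `ab` of `G` is monochromatic for the 2-colouring of `T`. Deleting the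
`|E(G)| - |V(G)|` edges outside `T + ab` leaves `M` as the unique perfect matching: a forest has at
most one perfect matching (an edge `xy` lies in it iff the component of `x` in the forest minus
`xy` has odd order), and no perfect matching of `T + ab` uses `ab`: it would pair the colour class
of `a` minus `{a, b}` with the other class, whereas `M` shows that the two classes have equal
size.
-/

open SimpleGraph Finset

namespace IsPM

variable {G H : SimpleGraph V} {M M' : Set (Sym2 V)}

section

omit [Fintype V] [DecidableEq V]

theorem mono (hM : IsPM G M) (hGH : G ≤ H) : IsPM H M :=
  ⟨hM.1.trans (edgeSet_mono hGH), hM.2⟩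

theorem of_subset_edgeSet (hM : IsPM G M) (hMH : M ⊆ H.edgeSet) : IsPM H M :=
  ⟨hMH, hM.2⟩

theorem fromEdgeSet (hM : IsPM G M) : IsPM (SimpleGraph.fromEdgeSet M) M :=
  hM.of_subset_edgeSet fun _ he =>
    (edgeSet_fromEdgeSet M).symm ▸ ⟨he, G.not_isDiag_of_mem_edgeSet (hM.1 he)⟩

noncomputable def partner (hM : IsPM G M) (v : V) : V :=
  Sym2.Mem.other (hM.2 v).exists.choose_spec.2

theorem mk_partner_mem (hM : IsPM G M) (v : V) : s(v, hM.partner v) ∈ M := by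
  rw [partner, Sym2.other_spec]
  exact (hM.2 v).exists.choose_spec.1

theorem partner_eq_of_mem (hM : IsPM G M) {v w : V} (h : s(v, w) ∈ M) : hM.partner v = w :=
  Sym2.congr_right.1 <|
    (hM.2 v).unique ⟨hM.mk_partner_mem v, Sym2.mem_mk_left _ _⟩ ⟨h, Sym2.mem_mk_left _ _⟩

theorem partner_partner (hM : IsPM G M) (v : V) : hM.partner (hM.partner v) = v :=
  hM.partner_eq_of_mem (Sym2.eq_swap ▸ hM.mk_partner_mem v)

theorem adj_partner (hM : IsPM G M) (v : V) : G.Adj v (hM.partner v) :=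
  hM.1 (hM.mk_partner_mem v)

theorem sum_eq_zero {β : Type*} [AddCommMonoid β] (hM : IsPM G M) {s : Finset V} {f : V → β}
    (hs : ∀ v ∈ s, hM.partner v ∈ s) (hf : ∀ v ∈ s, f v + f (hM.partner v) = 0) :
    ∑ v ∈ s, f v = 0 :=
  sum_involution (fun v _ => hM.partner v) hf (fun v _ _ => (hM.adj_partner v).ne')
    hs (fun v _ => hM.partner_partner v)

theorem even_card (hM : IsPM G M) {s : Finset V} (hs : ∀ v ∈ s, hM.partner v ∈ s) :
    Even #s := by
  rw [← ZMod.natCast_eq_zero_iff_even, cast_card]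
  exact hM.sum_eq_zero hs fun _ _ => by decide

theorem isAcyclic_fromEdgeSet (hM : IsPM G M) : (SimpleGraph.fromEdgeSet M).IsAcyclic := by
  refine isAcyclic_iff_forall_adj_isBridge.2 fun x y hxy => isBridge_iff.2 ?_
  rintro ⟨p⟩
  cases p with
  | nil => exact hxy.ne rfl
  | cons h _ =>
    simp only [deleteEdges_adj, fromEdgeSet_adj, Set.mem_singleton_iff] at h hxy
    exact h.2 (by rw [← hM.partner_eq_of_mem h.1.1, hM.partner_eq_of_mem hxy.1])

end

theorem mem_iff_odd_card_reachable (hG : G.IsAcyclic) (hM : IsPM G M) {x y : V} (hxy : G.Adj x y) :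
    s(x, y) ∈ M ↔ Odd #{w | (G.deleteEdges {s(x, y)}).Reachable x w} := by
  set C : Finset V := {w | (G.deleteEdges {s(x, y)}).Reachable x w}
  have hxC : x ∈ C := by simp [C]
  have hyC : y ∉ C := by
    simpa [C, isBridge_iff] using isAcyclic_iff_forall_adj_isBridge.1 hG hxy
  have hclosed : ∀ w ∈ C, s(w, hM.partner w) ≠ s(x, y) → hM.partner w ∈ C := by
    intro w hw hne
    simp only [C, mem_filter, mem_univ, true_and] at hw ⊢
    exact hw.trans (Adj.reachable (by simp [hM.adj_partner w, hne]))
  by_cases hmem : s(x, y) ∈ M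
  · have heven : Even #(C.erase x) := hM.even_card fun w hw => by
      obtain ⟨hwx, hwC⟩ := mem_erase.1 hw
      have hwy : w ≠ y := by rintro rfl; exact hyC hwC
      refine mem_erase.2 ⟨fun h => hwy ?_, hclosed w hwC (by simp [hwx, hwy])⟩
      rw [← hM.partner_partner w, h, hM.partner_eq_of_mem hmem]
    simpa [hmem, ← card_erase_add_one hxC] using heven.add_one
  · simpa [hmem] using hM.even_card fun w hw =>
      hclosed w hw fun h => hmem (h ▸ hM.mk_partner_mem w)

theorem eq_of_isAcyclic (hG : G.IsAcyclic) (hM : IsPM G M) (hM' : IsPM G M') : M = M' := by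
  ext e
  induction e using Sym2.ind with
  | _ x y =>
    by_cases hxy : G.Adj x y
    · rw [hM.mem_iff_odd_card_reachable hG hxy, hM'.mem_iff_odd_card_reachable hG hxy]
    · exact iff_of_false (fun h => hxy (hM.1 h)) (fun h => hxy (hM'.1 h))

theorem mk_notMem_of_sup_edge {T : SimpleGraph V} (c : T.Coloring (Fin 2)) {a b : V}
    (hcab : c a = c b) (hM : IsPM T M) (hM' : IsPM (T ⊔ edge a b) M') : s(a, b) ∉ M' := by
  intro hab
  let σ : V → ℤ := fun v => if c v = c a then 1 else -1
  have hσ : ∀ {x y}, T.Adj x y → σ x + σ y = 0 := fun h => by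
    have := c.valid h
    simp only [σ]
    split_ifs <;> omega
  have hab_ne : a ≠ b := (show (T ⊔ edge a b).Adj a b from hM'.1 hab).ne
  have hpa : hM'.partner a = b := hM'.partner_eq_of_mem hab
  have hpb : hM'.partner b = a := hM'.partner_eq_of_mem (Sym2.eq_swap ▸ hab)
  have hT : ∀ v, v ≠ a → v ≠ b → T.Adj v (hM'.partner v) := fun v hva hvb => by
    simpa [edge_adj, hva, hvb] using hM'.adj_partner v
  have hrest : ∑ v ∈ univ \ {a, b}, σ v = 0 := by
    refine hM'.sum_eq_zero (fun v hv => ?_) (fun v hv => ?_) <;>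
      simp only [mem_sdiff, mem_univ, true_and, mem_insert, mem_singleton, not_or] at hv ⊢
    · refine ⟨fun h => hv.2 ?_, fun h => hv.1 ?_⟩
      · rw [← hM'.partner_partner v, h, hpa]
      · rw [← hM'.partner_partner v, h, hpb]
    · exact hσ (hT v hv.1 hv.2)
  have htotal : ∑ v, σ v = 0 := hM.sum_eq_zero (by simp) fun v _ => hσ (hM.adj_partner v)
  rw [← sum_sdiff (subset_univ {a, b}), hrest, sum_pair hab_ne] at htotal
  simp [σ, hcab] at htotal

end IsPM

section

omit [DecidableEq V]

theorem SimpleGraph.IsTree.ncard_edgeSet_sup_edge {T : SimpleGraph V} (hT : T.IsTree) {a b : V}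
    (hab : a ≠ b) (hTab : ¬ T.Adj a b) : (T ⊔ edge a b).edgeSet.ncard = Fintype.card V := by
  rw [edgeSet_sup, edgeSet_edge_of_ne hab, Set.union_singleton,
    Set.ncard_insert_of_notMem (show s(a, b) ∉ T.edgeSet from hTab), ← Nat.card_coe_set_eq,
    ← Nat.card_eq_fintype_card]
  exact (isTree_iff_connected_and_card.1 hT).2

theorem af_add_ncard_edgeSet_le {G H : SimpleGraph V} {M : Set (Sym2 V)} (hHG : H ≤ G)
    (hH : IsUniquePM H M) : af G M + H.edgeSet.ncard ≤ G.edgeSet.ncard := by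
  have hdel : G.deleteEdges (G.edgeSet \ H.edgeSet) = H := by
    ext u v
    have huv := @hHG u v
    simp only [deleteEdges_adj, Set.mem_sdiff, mem_edgeSet]
    tauto
  have hS : IsAntiForcingSet G M ↑(G.edgeSet \ H.edgeSet).toFinset := by
    rw [Set.coe_toFinset, IsAntiForcingSet, hdel]
    exact ⟨Set.sdiff_subset_sdiff_right hH.1.1, hH⟩
  have haf : af G M ≤ (G.edgeSet \ H.edgeSet).ncard := by
    rw [Set.ncard_eq_toFinset_card']
    exact Nat.sInf_le ⟨_, rfl, hS⟩
  rw [← Set.ncard_sdiff_add_ncard_of_subset (edgeSet_mono hHG)]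
  omega

end

theorem isUniquePM_sup_edge {T : SimpleGraph V} (hT : T.IsAcyclic) (c : T.Coloring (Fin 2))
    {a b : V} (hcab : c a = c b) {M : Set (Sym2 V)} (hM : IsPM T M) :
    IsUniquePM (T ⊔ edge a b) M := by
  refine ⟨hM.mono le_sup_left, fun M' hM' =>
    (hM.eq_of_isAcyclic hT (hM'.of_subset_edgeSet ?_)).symm⟩
  intro e he
  have he' := hM'.1 he
  rw [edgeSet_sup] at he'
  refine he'.resolve_right fun h => IsPM.mk_notMem_of_sup_edge c hcab hM hM' ?_
  rwa [← Set.mem_singleton_iff.1 (edgeSet_edge_subset h)]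

/-- For a connected nonbipartite graph `G` with a perfect matching
`M`, `af(G, M) < |E(G)| - |V(G)| + 1` (the cyclomatic number). -/
theorem statement4 (G : SimpleGraph V) (hG : G.Connected) (hnb : ¬ G.Colorable 2)
    (M : Set (Sym2 V)) (hM : IsPM G M) :
    (af G M : ℤ) < (G.edgeSet.ncard : ℤ) - Fintype.card V + 1 := by
  obtain ⟨T, hMT, hTG, hT⟩ := hG.exists_isTree_le_of_le_of_isAcyclic
    ((fromEdgeSet_le G).2 (Set.sdiff_subset.trans hM.1)) hM.isAcyclic_fromEdgeSet
  obtain ⟨c⟩ := hT.colorable_two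
  obtain ⟨a, b, hab, hcab⟩ : ∃ a b, G.Adj a b ∧ c a = c b := by
    by_contra! h
    exact hnb ⟨Coloring.mk c fun hadj => h _ _ hadj⟩
  have hunique := isUniquePM_sup_edge hT.isAcyclic c hcab (hM.fromEdgeSet.mono hMT)
  have hbound := af_add_ncard_edgeSet_le (sup_le hTG ((edge_le_iff G).2 (Or.inr hab))) hunique
  rw [hT.ncard_edgeSet_sup_edge hab.ne fun h => c.valid h hcab] at hbound
  omega
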